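/- For any integer n ≥ 2, with s_k defined as the constant value of the 2k-cycle sum (s_1 = -1), one has Σ_{k=2}^n C(2n-1, 2k-1) s_k = 2n - 2. -/

import Mathlib

/-- The formal power series of `sin` over `ℚ`. -/
noncomputable def formalSin : PowerSeries ℚ :=
  PowerSeries.mk fun n => if n % 2 = 1 then (-1 : ℚ) ^ (n / 2) / n.factorial else 0

/-- The formal power series of `cos` over `ℚ`. -/
noncomputable def formalCos : PowerSeries ℚ :=
  PowerSeries.mk fun n => if n % 2 = 0 then (-1 : ℚ) ^ (n / 2) / n.factorial else 0

/-- The formal power series of `tan` over `ℚ`. -/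
noncomputable def formalTan : PowerSeries ℚ := formalSin * formalCos⁻¹

/-- The `n`-th tangent number `T_n`, defined by
`tan x = ∑_{n ≥ 1} T_n x^{2n-1}/(2n-1)!`. -/
noncomputable def tangentNumber (n : ℕ) : ℚ :=
  (2 * n - 1).factorial * PowerSeries.coeff (R := ℚ) (2 * n - 1) formalTan

open Finset

/-! Comparing the coefficients of `x^(2n-1)` in `cos x * tan x = sin x` gives
`∑_{k=1}^n C(2n-1, 2k-1) (-1)^k T_k = -1` for `n ≥ 1`, since `cos` only has even coefficients.
Taking `n = 1` gives `T_1 = 1`, and removing the term `k = 1`, which is `-(2n-1)`, leaves `2n - 2`. -/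

namespace PowerSeries

theorem coeff_two_mul_sub_one_mul_of_coeff_odd_eq_zero {R : Type*} [CommSemiring R]
    {g : PowerSeries R} (hg : ∀ m, Odd m → coeff m g = 0) (f : PowerSeries R) {n : ℕ}
    (hn : 1 ≤ n) :
    coeff (2 * n - 1) (g * f) = ∑ k ∈ Icc 1 n, coeff (2 * (n - k)) g * coeff (2 * k - 1) f := by
  have hinj : Set.InjOn (fun k => (2 * (n - k), 2 * k - 1)) (Icc 1 n) := by
    intro a ha b hb hab
    simp only [coe_Icc, Set.mem_Icc, Prod.mk.injEq] at ha hb hab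
    omega
  rw [coeff_mul, ← sum_image (f := fun p => coeff p.1 g * coeff p.2 f) hinj]
  refine (sum_subset ?_ fun p hp hp_not => ?_).symm
  · intro p hp
    simp only [mem_image, mem_Icc] at hp
    obtain ⟨k, hk, rfl⟩ := hp
    rw [HasAntidiagonal.mem_antidiagonal]
    omega
  · rw [HasAntidiagonal.mem_antidiagonal] at hp
    suffices Odd p.1 by rw [hg _ this, zero_mul]
    rw [← Nat.not_even_iff_odd]
    rintro ⟨m, hm⟩
    refine hp_not (mem_image.mpr ⟨n - m, mem_Icc.mpr ⟨by omega, by omega⟩, ?_⟩)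
    ext <;> simp only <;> omega

end PowerSeries

open PowerSeries

theorem formalCos_mul_formalTan : formalCos * formalTan = formalSin := by
  have hcos : constantCoeff formalCos ≠ 0 := by simp [formalCos]
  rw [formalTan, mul_left_comm, PowerSeries.mul_inv_cancel _ hcos, mul_one]

theorem coeff_formalCos_of_odd {m : ℕ} (hm : Odd m) : coeff m formalCos = 0 := by
  simp [formalCos, Nat.odd_iff.mp hm]

theorem coeff_formalCos_two_mul (m : ℕ) :
    coeff (2 * m) formalCos = (-1) ^ m / (2 * m).factorial := by
  simp [formalCos]

theorem coeff_formalSin_two_mul_sub_one {n : ℕ} (hn : 1 ≤ n) :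
    coeff (2 * n - 1) formalSin = (-1) ^ (n - 1) / (2 * n - 1).factorial := by
  have hmod : (2 * n - 1) % 2 = 1 := by omega
  have hdiv : (2 * n - 1) / 2 = n - 1 := by omega
  simp [formalSin, hmod, hdiv]

theorem coeff_formalTan_two_mul_sub_one (k : ℕ) :
    coeff (2 * k - 1) formalTan = tangentNumber k / (2 * k - 1).factorial := by
  rw [tangentNumber, mul_div_cancel_left₀ _ (by positivity)]

theorem coeff_formalCos_mul_coeff_formalTan {n k : ℕ} (hk : 1 ≤ k) (hkn : k ≤ n) :
    coeff (2 * (n - k)) formalCos * coeff (2 * k - 1) formalTan =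
      (-1) ^ n / (2 * n - 1).factorial *
        ((Nat.choose (2 * n - 1) (2 * k - 1) : ℚ) * ((-1) ^ k * tangentNumber k)) := by
  have hsign : ((-1 : ℚ)) ^ (n - k) = (-1) ^ n * (-1) ^ k := by
    rw [← Nat.sub_add_cancel hkn, pow_add, Nat.add_sub_cancel, mul_assoc, ← pow_add,
      Even.neg_one_pow ⟨k, rfl⟩, mul_one]
  have hchoose : (Nat.choose (2 * n - 1) (2 * k - 1) : ℚ) =
      (2 * n - 1).factorial / ((2 * k - 1).factorial * (2 * (n - k)).factorial) := by
    rw [Nat.cast_choose ℚ (by omega), show 2 * n - 1 - (2 * k - 1) = 2 * (n - k) by omega]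
  rw [coeff_formalCos_two_mul, coeff_formalTan_two_mul_sub_one, hsign, hchoose]
  field_simp

theorem sum_choose_mul_neg_one_pow_mul_tangentNumber {n : ℕ} (hn : 1 ≤ n) :
    ∑ k ∈ Icc 1 n, (Nat.choose (2 * n - 1) (2 * k - 1) : ℚ) * ((-1) ^ k * tangentNumber k) =
      -1 := by
  have hcoeff := congrArg (coeff (2 * n - 1)) formalCos_mul_formalTan
  rw [coeff_two_mul_sub_one_mul_of_coeff_odd_eq_zero (fun _ => coeff_formalCos_of_odd) _ hn,
    sum_congr rfl fun k hk => coeff_formalCos_mul_coeff_formalTan (mem_Icc.mp hk).1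
      (mem_Icc.mp hk).2, ← mul_sum, coeff_formalSin_two_mul_sub_one hn] at hcoeff
  have hsign : ((-1 : ℚ)) ^ (n - 1) = -(-1) ^ n := by
    rw [← Nat.sub_add_cancel hn, Nat.add_sub_cancel, pow_succ, mul_neg_one, neg_neg]
  rw [hsign] at hcoeff
  field_simp at hcoeff
  simpa only [mul_assoc] using hcoeff

theorem tangentNumber_one : tangentNumber 1 = 1 := by
  simpa using sum_choose_mul_neg_one_pow_mul_tangentNumber le_rfl

theorem sum_choose_mul_s_eq (n : ℕ) (hn : 2 ≤ n) :
    ∑ k ∈ Icc 2 n, (Nat.choose (2 * n - 1) (2 * k - 1) : ℚ) *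
        ((-1) ^ k * tangentNumber k) =
      2 * n - 2 := by
  have htotal := sum_choose_mul_neg_one_pow_mul_tangentNumber (n := n) (by omega)
  rw [← insert_Icc_add_one_left_eq_Icc (by omega), sum_insert (by simp),
    tangentNumber_one, Nat.choose_one_right, Nat.cast_sub (by omega)] at htotal
  push_cast at htotal
  linarith
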